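/- arXiv:0706.2782 — 10 statements merged into one kernel-verified Lean document; each statement's English description precedes it below -/
import Mathlib

section
/- Let a > b ≥ 1 be coprime integers. The set A := {u·a^(2i) : i ≥ 0, u a positive integer not divisible by a} contains no solutions to the equation a·x = b·y with x, y ∈ A. -/
theorem stmt_2 (a b : ℕ) (hab : b < a) (hb : 1 ≤ b) (hcop : Nat.Coprime a b)
    (A : Set ℕ) (hA : A = {m : ℕ | ∃ u i : ℕ, 0 < u ∧ ¬ a ∣ u ∧ m = u * a ^ (2 * i)}) :
    ¬ ∃ x ∈ A, ∃ y ∈ A, a * x = b * y := by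
  subst hA
  rintro ⟨x, ⟨u, i, hu, hau, rfl⟩, y, ⟨v, j, hv, hav, rfl⟩, heq⟩
  have ha : 0 < a := by omega
  have heq' : u * a ^ (2 * i + 1) = (b * v) * a ^ (2 * j) := by ring_nf; ring_nf at heq; linarith
  rcases le_or_gt (2 * j) (2 * i + 1) with h | h
  · -- cancel a^(2j): u * a^(2i+1-2j) = b * v, with 2i+1-2j ≥ 1 (parity)
    have hlt : 2 * j < 2 * i + 1 := by omega
    have : u * a ^ (2 * i + 1 - 2 * j) * a ^ (2 * j) = (b * v) * a ^ (2 * j) := by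
      rw [mul_assoc, ← pow_add]
      rw [Nat.sub_add_cancel (le_of_lt hlt)]
      exact heq'
    have h2 : u * a ^ (2 * i + 1 - 2 * j) = b * v :=
      Nat.eq_of_mul_eq_mul_right (pow_pos ha _) this
    have hdvd : a ∣ b * v := by
      rw [← h2]
      exact Dvd.dvd.mul_left (dvd_pow_self a (by omega)) u
    exact hav (hcop.dvd_of_dvd_mul_left hdvd)
  · -- cancel a^(2i+1): u = b * v * a^(2j-2i-1), so a ∣ u
    have : u * a ^ (2 * i + 1) = (b * v) * a ^ (2 * j - (2 * i + 1)) * a ^ (2 * i + 1) := by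
      rw [mul_assoc, ← pow_add, Nat.sub_add_cancel (le_of_lt h)]
      exact heq'
    have h2 : u = (b * v) * a ^ (2 * j - (2 * i + 1)) :=
      Nat.eq_of_mul_eq_mul_right (pow_pos ha _) this
    refine hau ?_
    rw [h2]
    exact Dvd.dvd.mul_left (dvd_pow_self a (by omega)) (b * v)
end

section
/- Let b ≥ 2 be an integer. The set A_b := {u·b^(3i) : u ≥ 1, i ≥ 0, b does not divide u} contains no solutions (x,y,z) with x,y,z ∈ A_b to the equation x + b·y = b²·z. -/
private lemma key_not_dvd (b : ℕ) (u e : ℕ) (hb : 2 ≤ b) (hu : ¬ b ∣ u) :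
    ¬ b ^ (e + 1) ∣ u * b ^ e := by
  intro h
  apply hu
  have hpos : 0 < b ^ e := pow_pos (by omega) e
  rw [pow_succ, mul_comm (u : ℕ)] at h
  exact (mul_dvd_mul_iff_left hpos.ne').mp h

private lemma val_unique (b n m M : ℕ) (h1 : b ^ m ∣ n) (h2 : ¬ b ^ (m + 1) ∣ n)
    (h3 : b ^ M ∣ n) (h4 : ¬ b ^ (M + 1) ∣ n) : m = M := by
  by_contra hne
  rcases Nat.lt_or_ge m M with h | h
  · exact h2 (dvd_trans (pow_dvd_pow b (by omega)) h3)
  · exact h4 (dvd_trans (pow_dvd_pow b (by omega)) h1)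

theorem stmt_3 (b : ℕ) (hb : 2 ≤ b)
    (A : Set ℕ) (hA : A = {m : ℕ | ∃ u i : ℕ, 1 ≤ u ∧ ¬ b ∣ u ∧ m = u * b ^ (3 * i)}) :
    ¬ ∃ x ∈ A, ∃ y ∈ A, ∃ z ∈ A, x + b * y = b ^ 2 * z := by
  subst hA
  rintro ⟨x, ⟨u, i, hu1, hu2, rfl⟩, y, ⟨v, j, hv1, hv2, rfl⟩, z, ⟨w, k, hw1, hw2, rfl⟩, heq⟩
  have hX : u * b ^ (3 * i) + v * b ^ (3 * j + 1) = w * b ^ (3 * k + 2) := by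
    ring_nf at heq ⊢; omega
  set N := u * b ^ (3 * i) + v * b ^ (3 * j + 1) with hN
  -- exact valuation of RHS is 3k+2
  have hR1 : b ^ (3 * k + 2) ∣ N := hX ▸ dvd_mul_left _ w
  have hR2 : ¬ b ^ (3 * k + 2 + 1) ∣ N := by
    rw [hX]; exact key_not_dvd b w (3 * k + 2) hb hw2
  -- exact valuation of LHS
  have main : ∀ m : ℕ, b ^ m ∣ N → ¬ b ^ (m + 1) ∣ N → m % 3 ≠ 2 → False := by
    intro m h1 h2 h3
    have := val_unique b N m (3 * k + 2) h1 h2 hR1 hR2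
    omega
  rcases Nat.lt_or_ge (3 * i) (3 * j + 1) with hlt | hge
  · have hij : 3 * i + 1 ≤ 3 * j + 1 := by omega
    apply main (3 * i)
    · exact dvd_add (dvd_mul_left _ u) (dvd_mul_of_dvd_right (pow_dvd_pow b (by omega)) v)
    · intro h
      have h2 : b ^ (3 * i + 1) ∣ v * b ^ (3 * j + 1) :=
        dvd_mul_of_dvd_right (pow_dvd_pow b hij) v
      have h3 : b ^ (3 * i + 1) ∣ u * b ^ (3 * i) := by
        have := Nat.dvd_sub h h2
        simpa [hN, Nat.add_sub_cancel] using this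
      exact key_not_dvd b u (3 * i) hb hu2 h3
    · omega
  · apply main (3 * j + 1)
    · exact dvd_add (dvd_mul_of_dvd_right (pow_dvd_pow b (by omega)) u) (dvd_mul_left _ v)
    · intro h
      have h2 : b ^ (3 * j + 1 + 1) ∣ u * b ^ (3 * i) :=
        dvd_mul_of_dvd_right (pow_dvd_pow b (by omega)) u
      have h3 : b ^ (3 * j + 1 + 1) ∣ v * b ^ (3 * j + 1) := by
        have := Nat.dvd_sub h h2
        simpa [hN, Nat.add_sub_cancel_left] using this
      exact key_not_dvd b v (3 * j + 1) hb hv2 h3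
    · omega
end

section
/- Let b ≥ 2 be an integer. The set A_b := {u·b^(3i) : u ≥ 1, i ≥ 0, b ∤ u} has natural asymptotic density b²/(b²+b+1), i.e. |A_b ∩ [1,n]| / n → b²/(b²+b+1) as n → ∞. -/
/-!
A positive integer lies in `A_b` exactly when the largest power of `b` dividing it is `b^(3j)`
for some `j`. Among `1, …, n` there are `⌊n/b^k⌋ - ⌊n/b^(k+1)⌋` integers exactly divisible by
`b^k`, so `|A_b ∩ [1, n]| = ∑_j (⌊n/b^(3j)⌋ - ⌊n/b^(3j+1)⌋)`, a sum of `O(log n)` nonzero terms.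
Dropping the floors costs at most `1` per term, and the resulting geometric series equals
`n (1 - 1/b) / (1 - 1/b³) = n b²/(b² + b + 1)` up to a tail below `1`.
-/

open scoped Classical

open Finset Filter Topology

section Counting

variable {b : ℕ}

theorem exists_eq_mul_pow_iff (hb : 0 < b) (k m : ℕ) :
    (∃ u, 1 ≤ u ∧ ¬ b ∣ u ∧ m = u * b ^ k) ↔ 0 < m ∧ b ^ k ∣ m ∧ ¬ b ^ (k + 1) ∣ m := by
  have hbk : 0 < b ^ k := pow_pos hb k
  constructor
  · rintro ⟨u, hu, hbu, rfl⟩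
    refine ⟨Nat.mul_pos hu hbk, dvd_mul_left _ _, ?_⟩
    rwa [pow_succ, mul_comm u, Nat.mul_dvd_mul_iff_left hbk]
  · rintro ⟨hm, ⟨u, rfl⟩, hndvd⟩
    refine ⟨u, Nat.pos_of_mul_pos_left hm, fun h => hndvd ?_, mul_comm _ _⟩
    rw [pow_succ]
    exact Nat.mul_dvd_mul_left _ h

theorem card_filter_pow_dvd_not_pow_succ_dvd (k n : ℕ) :
    #{m ∈ Ioc 0 n | b ^ k ∣ m ∧ ¬ b ^ (k + 1) ∣ m} = n / b ^ k - n / b ^ (k + 1) := by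
  have hsub : {m ∈ Ioc 0 n | b ^ (k + 1) ∣ m} ⊆ {m ∈ Ioc 0 n | b ^ k ∣ m} :=
    monotone_filter_right _ fun m _ h => (pow_dvd_pow b k.le_succ).trans h
  rw [filter_and_not, card_sdiff_of_subset hsub, Nat.Ioc_filter_dvd_card_eq_div,
    Nat.Ioc_filter_dvd_card_eq_div]

theorem disjoint_filter_pow_dvd_not_pow_succ_dvd (s : Finset ℕ) {i k : ℕ} (hik : i ≠ k) :
    Disjoint {m ∈ s | b ^ i ∣ m ∧ ¬ b ^ (i + 1) ∣ m} {m ∈ s | b ^ k ∣ m ∧ ¬ b ^ (k + 1) ∣ m} := by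
  rw [disjoint_filter]
  rintro m - ⟨hi, hi'⟩ ⟨hk, hk'⟩
  rcases hik.lt_or_gt with h | h
  · exact hi' ((pow_dvd_pow b h).trans hk)
  · exact hk' ((pow_dvd_pow b h).trans hi)

theorem card_filter_exists_eq_mul_pow_three_mul (hb : 2 ≤ b) {n M : ℕ} (hn : n < b ^ M) :
    #{m ∈ Icc 1 n | ∃ u i : ℕ, 1 ≤ u ∧ ¬ b ∣ u ∧ m = u * b ^ (3 * i)} =
      ∑ j ∈ range M, (n / b ^ (3 * j) - n / b ^ (3 * j + 1)) := by
  have hset : {m ∈ Icc 1 n | ∃ u i : ℕ, 1 ≤ u ∧ ¬ b ∣ u ∧ m = u * b ^ (3 * i)} =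
      (range M).biUnion fun j => {m ∈ Ioc 0 n | b ^ (3 * j) ∣ m ∧ ¬ b ^ (3 * j + 1) ∣ m} := by
    ext m
    simp only [mem_filter, mem_biUnion, mem_range, mem_Icc, mem_Ioc]
    rw [exists_comm]
    simp only [exists_eq_mul_pow_iff (by omega : 0 < b)]
    constructor
    · rintro ⟨⟨hm1, hmn⟩, j, hm, hdvd, hndvd⟩
      have hpow : b ^ (3 * j) < b ^ M := (Nat.le_of_dvd hm hdvd).trans_lt (hmn.trans_lt hn)
      have hjM : 3 * j < M := (Nat.pow_lt_pow_iff_right (by omega)).mp hpow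
      exact ⟨j, by omega, ⟨hm, hmn⟩, hdvd, hndvd⟩
    · rintro ⟨j, -, ⟨hm, hmn⟩, hdvd, hndvd⟩
      exact ⟨⟨hm, hmn⟩, j, hm, hdvd, hndvd⟩
  rw [hset, card_biUnion fun i _ j _ hij =>
    disjoint_filter_pow_dvd_not_pow_succ_dvd _ (by omega)]
  exact sum_congr rfl fun j _ => card_filter_pow_dvd_not_pow_succ_dvd (3 * j) n

end Counting

theorem abs_natCast_div_sub_div_sub_le {p q : ℕ} (hp : 0 < p) (hpq : p ≤ q) (n : ℕ) :
    |((n / p - n / q : ℕ) : ℝ) - ((n : ℝ) / p - n / q)| ≤ 1 := by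
  rw [Nat.cast_sub (Nat.div_le_div_left hpq hp), ← Nat.floor_div_eq_div (K := ℝ) n p,
    ← Nat.floor_div_eq_div (K := ℝ) n q]
  have hp_le := Nat.floor_le (a := (n : ℝ) / p) (by positivity)
  have hq_le := Nat.floor_le (a := (n : ℝ) / q) (by positivity)
  have hp_lt := Nat.sub_one_lt_floor ((n : ℝ) / p)
  have hq_lt := Nat.sub_one_lt_floor ((n : ℝ) / q)
  rw [abs_le]
  constructor <;> linarith

theorem sum_range_div_pow_three_mul_sub {b : ℝ} (hb : 0 < b) (x : ℝ) (M : ℕ) :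
    ∑ j ∈ range M, (x / b ^ (3 * j) - x / b ^ (3 * j + 1)) =
      x * (b ^ 2 / (b ^ 2 + b + 1)) * (1 - 1 / b ^ (3 * M)) := by
  have hb0 : b ≠ 0 := by positivity
  have hden : b ^ 2 + b + 1 ≠ 0 := by positivity
  induction M with
  | zero => simp
  | succ M ih =>
    rw [sum_range_succ, ih]
    field_simp
    ring

theorem abs_sum_natCast_div_pow_three_mul_sub_le {b : ℕ} (hb : 2 ≤ b) {n M : ℕ}
    (hn : n < b ^ M) :
    |∑ j ∈ range M, ((n / b ^ (3 * j) - n / b ^ (3 * j + 1) : ℕ) : ℝ) -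
        n * ((b : ℝ) ^ 2 / (b ^ 2 + b + 1))| ≤ (M + 1 : ℝ) := by
  set d : ℝ := (b : ℝ) ^ 2 / (b ^ 2 + b + 1)
  have hfloor : |∑ j ∈ range M, ((n / b ^ (3 * j) - n / b ^ (3 * j + 1) : ℕ) : ℝ) -
      ∑ j ∈ range M, ((n : ℝ) / (b : ℝ) ^ (3 * j) - n / (b : ℝ) ^ (3 * j + 1))| ≤ M := by
    rw [← sum_sub_distrib]
    refine (abs_sum_le_sum_abs _ _).trans ?_
    have hterms := sum_le_sum fun j (_ : j ∈ range M) => abs_natCast_div_sub_div_sub_le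
      (pow_pos (by omega : 0 < b) (3 * j)) (Nat.pow_le_pow_right (by omega) (3 * j).le_succ) n
    simpa using hterms
  have htail : |∑ j ∈ range M, ((n : ℝ) / (b : ℝ) ^ (3 * j) - n / (b : ℝ) ^ (3 * j + 1)) -
      n * d| ≤ 1 := by
    have hd : d ≤ 1 := by rw [div_le_one (by positivity)]; nlinarith
    have hnb : (n : ℝ) ≤ (b : ℝ) ^ (3 * M) := by
      exact_mod_cast hn.le.trans (Nat.pow_le_pow_right (by omega) (by omega))
    have hsub : ∀ y : ℝ, n * d * (1 - 1 / y) - n * d = -(d * (n / y)) := fun y => by ring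
    rw [sum_range_div_pow_three_mul_sub (by positivity), hsub, abs_neg,
      abs_of_nonneg (by positivity)]
    have hratio : (n : ℝ) / (b : ℝ) ^ (3 * M) ≤ 1 := div_le_one_of_le₀ hnb (by positivity)
    nlinarith [show 0 ≤ (n : ℝ) / (b : ℝ) ^ (3 * M) by positivity]
  calc _ ≤ _ := abs_sub_le _ _ _
    _ ≤ (M : ℝ) + 1 := add_le_add hfloor htail

theorem tendsto_natLog_div_atTop (b : ℕ) :
    Tendsto (fun n : ℕ => (Nat.log b n : ℝ) / n) atTop (𝓝 0) := by
  have hlog : Tendsto (fun n : ℕ => Real.log n / n / Real.log b) atTop (𝓝 0) := by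
    simpa using (Real.isLittleO_log_id_atTop.tendsto_div_nhds_zero.comp
      tendsto_natCast_atTop_atTop).div_const (Real.log b)
  refine squeeze_zero (fun n => by positivity) (fun n => ?_) hlog
  rw [div_right_comm, ← Real.logb]
  exact div_le_div_of_nonneg_right (Real.natLog_le_logb n b) n.cast_nonneg

theorem tendsto_div_of_abs_sub_mul_le {f g : ℕ → ℝ} {d : ℝ} (hfg : ∀ n, |f n - n * d| ≤ g n)
    (hg : Tendsto (fun n => g n / n) atTop (𝓝 0)) :
    Tendsto (fun n => f n / n) atTop (𝓝 d) := by
  rw [tendsto_iff_dist_tendsto_zero]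
  refine squeeze_zero' (Eventually.of_forall fun n => dist_nonneg) ?_ hg
  filter_upwards [eventually_gt_atTop 0] with n hn
  have hn' : (0 : ℝ) < n := by exact_mod_cast hn
  rw [Real.dist_eq, div_sub' hn'.ne', abs_div, abs_of_pos hn']
  exact div_le_div_of_nonneg_right (hfg n) hn'.le

theorem stmt_4 (b : ℕ) (hb : 2 ≤ b)
    (A : Set ℕ) (hA : A = {m : ℕ | ∃ u i : ℕ, 1 ≤ u ∧ ¬ b ∣ u ∧ m = u * b ^ (3 * i)}) :
    Filter.Tendsto
      (fun n : ℕ => (((Finset.Icc 1 n).filter (· ∈ A)).card : ℝ) / n)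
      Filter.atTop
      (nhds ((b : ℝ) ^ 2 / (b ^ 2 + b + 1))) := by
  subst hA
  refine tendsto_div_of_abs_sub_mul_le (g := fun n => Nat.log b n + 2) (fun n => ?_) ?_
  · have hn := Nat.lt_pow_succ_log_self (by omega : 1 < b) n
    have hsum := abs_sum_natCast_div_pow_three_mul_sub_le hb hn
    simp only [Set.mem_ofPred_eq]
    rw [card_filter_exists_eq_mul_pow_three_mul hb hn, Nat.cast_sum]
    push_cast at hsum
    linarith
  · simpa [add_div] using
      (tendsto_natLog_div_atTop b).add (tendsto_const_div_atTop_nhds_zero_nat 2)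
end

section
/- For every integer b ≥ 2, b²/(b²+b+1) > (b²−b−1)(b⁴−b²+1) / (b²·(b⁴−b(b+1))). -/
theorem stmt_5 (b : ℕ) (hb : 2 ≤ b) :
    ((b : ℝ) ^ 2 - b - 1) * (b ^ 4 - b ^ 2 + 1) / (b ^ 2 * (b ^ 4 - b * (b + 1)))
      < (b : ℝ) ^ 2 / (b ^ 2 + b + 1) := by
  have hx : (2 : ℝ) ≤ (b : ℝ) := by exact_mod_cast hb
  set x : ℝ := (b : ℝ)
  have h1 : (0 : ℝ) < x ^ 2 * (x ^ 4 - x * (x + 1)) := by nlinarith [sq_nonneg (x^2-2), sq_nonneg (x-2), sq_nonneg x]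
  have h2 : (0 : ℝ) < x ^ 2 + x + 1 := by nlinarith
  rw [div_lt_div_iff₀ h1 h2]
  nlinarith [sq_nonneg x, sq_nonneg (x - 2), pow_le_pow_left₀ (by linarith : (0:ℝ) ≤ 2) hx 3]
end

section
/- For every positive integer n, the set A_3 ∩ [1,n], where A_3 := {u·3^(3i) : u ≥ 1, 3 ∤ u, i ≥ 0} = {u·27^i : 3 ∤ u}, is a maximum-size subset of {1,...,n} containing no solutions to x + 3y = 9z; that is, every subset B of {1,...,n} avoiding x + 3y = 9z satisfies |B| ≤ |A_3 ∩ [1,n]|. -/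
open scoped Classical

private lemma three_prime' : Nat.Prime 3 := by norm_num

private lemma fact3_mul_not_dvd {c x : ℕ} (hc : ¬ 3 ∣ c) (hc0 : c ≠ 0) (hx : x ≠ 0) :
    (c * x).factorization 3 = x.factorization 3 := by
  rw [Nat.factorization_mul hc0 hx]
  simp [Nat.factorization_eq_zero_of_not_dvd hc]

private lemma fact3_three {s : ℕ} (hs : s ≠ 0) :
    (3 * s).factorization 3 = s.factorization 3 + 1 := by
  rw [Nat.factorization_mul (by norm_num) hs]
  simp [Nat.Prime.factorization_self three_prime']
  omega

private lemma fact3_nine {t : ℕ} (ht : t ≠ 0) :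
    (9 * t).factorization 3 = t.factorization 3 + 2 := by
  have e : 9 * t = 3 * (3 * t) := by ring
  rw [e, fact3_three (by positivity), fact3_three ht]

theorem stmt_7 (n : ℕ) (hn : 1 ≤ n)
    (A : Set ℕ) (hA : A = {m : ℕ | ∃ u i : ℕ, 1 ≤ u ∧ ¬ 3 ∣ u ∧ m = u * 27 ^ i})
    (B : Finset ℕ) (hB : B ⊆ Finset.Icc 1 n)
    (havoid : ¬ ∃ x ∈ B, ∃ y ∈ B, ∃ z ∈ B, x + 3 * y = 9 * z) :
    B.card ≤ ((Finset.Icc 1 n).filter (· ∈ A)).card := by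
  classical
  push_neg at havoid
  have sol : ∀ x y z : ℕ, x ∈ B → y ∈ B → z ∈ B → x + 3 * y = 9 * z → False :=
    fun x y z hx hy hz he => havoid x hx y hy z hz he
  have hpos : ∀ m ∈ B, 1 ≤ m ∧ m ≤ n := fun m hm => Finset.mem_Icc.mp (hB hm)
  -- the injection
  set f : ℕ → ℕ := fun m =>
    if m.factorization 3 % 3 = 1 then (if m / 3 ∈ B then 2 * (m / 3) else m / 3)
    else if m.factorization 3 % 3 = 2 then
      (if 12 * (m / 9) ∈ B then
        (if 3 * (m / 9) ∈ B then 8 * (m / 9)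
         else if 6 * (m / 9) ∈ B then m / 9 else 2 * (m / 9))
       else if 6 * (m / 9) ∈ B ∧ 2 * (m / 9) ∈ B then m / 9 else 4 * (m / 9))
    else m with hfdef
  -- branch analysis
  have hbr : ∀ m ∈ B,
      (m.factorization 3 % 3 = 0 ∧ f m = m) ∨
      (∃ s : ℕ, s ≠ 0 ∧ m = 3 * s ∧ s.factorization 3 % 3 = 0 ∧
        ((s ∈ B ∧ f m = 2 * s ∧ 2 * s ∉ B) ∨ (s ∉ B ∧ f m = s))) ∨
      (∃ t : ℕ, t ≠ 0 ∧ m = 9 * t ∧ t.factorization 3 % 3 = 0 ∧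
        ((12 * t ∈ B ∧ 3 * t ∈ B ∧ f m = 8 * t ∧ 8 * t ∉ B) ∨
         (12 * t ∈ B ∧ 3 * t ∉ B ∧ 6 * t ∈ B ∧ f m = t ∧ t ∉ B) ∨
         (12 * t ∈ B ∧ 3 * t ∉ B ∧ 6 * t ∉ B ∧ f m = 2 * t ∧ 2 * t ∉ B) ∨
         (12 * t ∉ B ∧ 6 * t ∈ B ∧ 2 * t ∈ B ∧ f m = t ∧ t ∉ B) ∨
         (12 * t ∉ B ∧ ¬ (6 * t ∈ B ∧ 2 * t ∈ B) ∧ f m = 4 * t ∧ 4 * t ∉ B))) := by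
    intro m hm
    have hm0 : m ≠ 0 := by have := (hpos m hm).1; omega
    have hcase : m.factorization 3 % 3 = 0 ∨ m.factorization 3 % 3 = 1 ∨
        m.factorization 3 % 3 = 2 := by omega
    rcases hcase with h0 | h1 | h2
    · left
      refine ⟨h0, ?_⟩
      rw [hfdef]
      simp only [if_neg (by omega : ¬ (m.factorization 3 % 3 = 1)),
        if_neg (by omega : ¬ (m.factorization 3 % 3 = 2))]
    · right; left
      have hdvd : (3 : ℕ) ∣ m := by
        have := (Nat.Prime.pow_dvd_iff_le_factorization three_prime' hm0 (k := 1) (n := m)).mpr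
          (by omega)
        simpa using this
      set s := m / 3 with hs
      have hms : m = 3 * s := (Nat.mul_div_cancel' hdvd).symm
      have hs0 : s ≠ 0 := by intro h; rw [h] at hms; omega
      have hvs : s.factorization 3 % 3 = 0 := by
        rw [hms, fact3_three hs0] at h1; omega
      have hfm : f m = if s ∈ B then 2 * s else s := by
        rw [hfdef]; simp only [← hs, if_pos h1]
      refine ⟨s, hs0, hms, hvs, ?_⟩
      by_cases hsB : s ∈ B
      · left
        refine ⟨hsB, by rw [hfm, if_pos hsB], fun h2s => ?_⟩
        exact sol (3 * s) (2 * s) s (hms ▸ hm) h2s hsB (by ring)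
      · right; exact ⟨hsB, by rw [hfm, if_neg hsB]⟩
    · right; right
      have hdvd : (9 : ℕ) ∣ m := by
        have := (Nat.Prime.pow_dvd_iff_le_factorization three_prime' hm0 (k := 2) (n := m)).mpr
          (by omega)
        simpa using this
      set t := m / 9 with ht
      have hmt : m = 9 * t := (Nat.mul_div_cancel' hdvd).symm
      have ht0 : t ≠ 0 := by intro h; rw [h] at hmt; omega
      have hvt : t.factorization 3 % 3 = 0 := by
        rw [hmt, fact3_nine ht0] at h2; omega
      have h9B : 9 * t ∈ B := hmt ▸ hm
      have hfm : f m = if 12 * t ∈ B then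
          (if 3 * t ∈ B then 8 * t else if 6 * t ∈ B then t else 2 * t)
          else if 6 * t ∈ B ∧ 2 * t ∈ B then t else 4 * t := by
        rw [hfdef]
        simp only [← ht, if_neg (by omega : ¬ (m.factorization 3 % 3 = 1)), if_pos h2]
      refine ⟨t, ht0, hmt, hvt, ?_⟩
      by_cases h12 : 12 * t ∈ B
      · by_cases h3t : 3 * t ∈ B
        · left
          refine ⟨h12, h3t, by rw [hfm, if_pos h12, if_pos h3t], fun h8 => ?_⟩
          exact sol (3 * t) (8 * t) (3 * t) h3t h8 h3t (by ring)
        · by_cases h6t : 6 * t ∈ B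
          · right; left
            refine ⟨h12, h3t, h6t,
              by rw [hfm, if_pos h12, if_neg h3t, if_pos h6t], fun htB => ?_⟩
            exact sol (6 * t) t t h6t htB htB (by ring)
          · right; right; left
            refine ⟨h12, h3t, h6t,
              by rw [hfm, if_pos h12, if_neg h3t, if_neg h6t], fun h2t => ?_⟩
            exact sol (12 * t) (2 * t) (2 * t) h12 h2t h2t (by ring)
      · by_cases h62 : 6 * t ∈ B ∧ 2 * t ∈ B
        · right; right; right; left
          refine ⟨h12, h62.1, h62.2, by rw [hfm, if_neg h12, if_pos h62], fun htB => ?_⟩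
          exact sol (6 * t) t t h62.1 htB htB (by ring)
        · right; right; right; right
          refine ⟨h12, h62, by rw [hfm, if_neg h12, if_neg h62], fun h4 => ?_⟩
          exact sol (9 * t) (9 * t) (4 * t) h9B h9B h4 (by ring)
  -- membership of targets in the goal set
  have hmemA : ∀ x : ℕ, 1 ≤ x → x ≤ n → x.factorization 3 % 3 = 0 →
      x ∈ (Finset.Icc 1 n).filter (· ∈ A) := by
    intro x hx1 hxn hx3
    rw [Finset.mem_filter]
    refine ⟨Finset.mem_Icc.mpr ⟨hx1, hxn⟩, ?_⟩
    rw [hA]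
    have hx0 : x ≠ 0 := by omega
    refine ⟨x / 3 ^ (x.factorization 3), x.factorization 3 / 3,
      Nat.ordCompl_pos 3 hx0, Nat.not_dvd_ordCompl three_prime' hx0, ?_⟩
    have e := Nat.ordProj_mul_ordCompl_eq_self x 3
    have e27 : (27 : ℕ) ^ (x.factorization 3 / 3) = 3 ^ (x.factorization 3) := by
      rw [show (27 : ℕ) = 3 ^ 3 from rfl, ← pow_mul]
      congr 1
      omega
    rw [e27, mul_comm]
    exact e.symm
  have hmap : ∀ m ∈ B, f m ∈ (Finset.Icc 1 n).filter (· ∈ A) := by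
    intro m hm
    obtain ⟨hm1, hmn⟩ := hpos m hm
    rcases hbr m hm with ⟨h0, he⟩ | ⟨s, hs0, hms, hvs, hc⟩ | ⟨t, ht0, hmt, hvt, hc⟩
    · rw [he]; exact hmemA m hm1 hmn h0
    · rcases hc with ⟨_, he, _⟩ | ⟨_, he⟩
      · rw [he]
        exact hmemA _ (by omega) (by omega)
          (by rw [fact3_mul_not_dvd (by norm_num) (by norm_num) hs0]; exact hvs)
      · rw [he]; exact hmemA _ (by omega) (by omega) hvs
    · rcases hc with ⟨h12, _, he, _⟩ | ⟨_, _, _, he, _⟩ | ⟨_, _, _, he, _⟩ |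
        ⟨_, _, _, he, _⟩ | ⟨_, _, he, _⟩
      · have h12n := (hpos _ h12).2
        rw [he]
        exact hmemA _ (by omega) (by omega)
          (by rw [fact3_mul_not_dvd (by norm_num) (by norm_num) ht0]; exact hvt)
      · rw [he]; exact hmemA _ (by omega) (by omega) hvt
      · rw [he]
        exact hmemA _ (by omega) (by omega)
          (by rw [fact3_mul_not_dvd (by norm_num) (by norm_num) ht0]; exact hvt)
      · rw [he]; exact hmemA _ (by omega) (by omega) hvt
      · rw [he]
        exact hmemA _ (by omega) (by omega)
          (by rw [fact3_mul_not_dvd (by norm_num) (by norm_num) ht0]; exact hvt)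

  -- injectivity
  have hinj : Set.InjOn f B := by
    intro a ha b hb heq
    rcases hbr a ha with ⟨-, ea⟩ | ⟨s, hs0, has, -, ca⟩ | ⟨t, ht0, hat, -, ca⟩
    · -- a is level 0
      rcases hbr b hb with ⟨-, eb⟩ | ⟨s', hs0', hbs, -, cb⟩ | ⟨t', ht0', hbt, -, cb⟩
      · rw [ea, eb] at heq; exact heq
      · have hfb : f b ∈ B := by rw [← heq, ea]; exact ha
        rcases cb with ⟨-, eb, hnb⟩ | ⟨hnb, eb⟩ <;> rw [eb] at hfb <;> exact absurd hfb hnb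
      · have hfb : f b ∈ B := by rw [← heq, ea]; exact ha
        rcases cb with ⟨-, -, eb, hnb⟩ | ⟨-, -, -, eb, hnb⟩ | ⟨-, -, -, eb, hnb⟩ |
          ⟨-, -, -, eb, hnb⟩ | ⟨-, -, eb, hnb⟩ <;> rw [eb] at hfb <;> exact absurd hfb hnb
    · -- a = 3*s
      have ha' : 3 * s ∈ B := by rw [has] at ha; exact ha
      rcases hbr b hb with ⟨-, eb⟩ | ⟨s', hs0', hbs, -, cb⟩ | ⟨t', ht0', hbt, -, cb⟩
      · have hfa : f a ∈ B := by rw [heq, eb]; exact hb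
        rcases ca with ⟨-, ea, hna⟩ | ⟨hna, ea⟩ <;> rw [ea] at hfa <;> exact absurd hfa hna
      · -- b = 3*s'
        have hb' : 3 * s' ∈ B := by rw [hbs] at hb; exact hb
        rcases ca with ⟨hsBa, ea, -⟩ | ⟨hsna, ea⟩ <;> rcases cb with ⟨hsBb, eb, -⟩ | ⟨hsnb, eb⟩ <;>
          rw [ea, eb] at heq
        · omega
        · exact (sol (3 * s') s s hb' hsBa hsBa (by omega)).elim
        · exact (sol (3 * s) s' s' ha' hsBb hsBb (by omega)).elim
        · omega
      · -- b = 9*t'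
        have hb' : 9 * t' ∈ B := by rw [hbt] at hb; exact hb
        rcases ca with ⟨hsBa, ea, -⟩ | ⟨hsna, ea⟩
        · rcases cb with ⟨h12b, h3b, eb, -⟩ | ⟨h12b, h3b, h6b, eb, -⟩ |
            ⟨h12b, h3b, h6b, eb, -⟩ | ⟨h12b, h6b, h2b, eb, -⟩ | ⟨h12b, hn62b, eb, -⟩ <;>
            rw [ea, eb] at heq
          · exact (sol (9 * t') (9 * t') s hb' hb' hsBa (by omega)).elim
          · exact (sol (9 * t') (3 * s) (3 * s) hb' ha' ha' (by omega)).elim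
          · exact absurd (show (3 : ℕ) * t' ∈ B by
              rw [show 3 * t' = 3 * s by omega]; exact ha') h3b
          · exact (sol (9 * t') (3 * s) (3 * s) hb' ha' ha' (by omega)).elim
          · exact absurd (⟨show (6 : ℕ) * t' ∈ B by
                rw [show 6 * t' = 3 * s by omega]; exact ha',
              show (2 : ℕ) * t' ∈ B by
                rw [show 2 * t' = s by omega]; exact hsBa⟩ :
              (6 * t' ∈ B ∧ 2 * t' ∈ B)) hn62b
        · rcases cb with ⟨h12b, h3b, eb, -⟩ | ⟨h12b, h3b, h6b, eb, -⟩ |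
            ⟨h12b, h3b, h6b, eb, -⟩ | ⟨h12b, h6b, h2b, eb, -⟩ | ⟨h12b, hn62b, eb, -⟩ <;>
            rw [ea, eb] at heq
          · exact (sol (9 * t') (3 * s) (9 * t') hb' ha' hb' (by omega)).elim
          · exact absurd (show (3 : ℕ) * t' ∈ B by
              rw [show 3 * t' = 3 * s by omega]; exact ha') h3b
          · exact absurd (show (6 : ℕ) * t' ∈ B by
              rw [show 6 * t' = 3 * s by omega]; exact ha') h6b
          · exact (sol (9 * t') (6 * t') (3 * s) hb' h6b ha' (by omega)).elim
          · exact absurd (show (12 : ℕ) * t' ∈ B by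
              rw [show 12 * t' = 3 * s by omega]; exact ha') h12b
    · -- a = 9*t
      have ha' : 9 * t ∈ B := by rw [hat] at ha; exact ha
      rcases hbr b hb with ⟨-, eb⟩ | ⟨s', hs0', hbs, -, cb⟩ | ⟨t', ht0', hbt, -, cb⟩
      · have hfa : f a ∈ B := by rw [heq, eb]; exact hb
        rcases ca with ⟨-, -, ea, hna⟩ | ⟨-, -, -, ea, hna⟩ | ⟨-, -, -, ea, hna⟩ |
          ⟨-, -, -, ea, hna⟩ | ⟨-, -, ea, hna⟩ <;> rw [ea] at hfa <;> exact absurd hfa hna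
      · -- b = 3*s'
        have hb' : 3 * s' ∈ B := by rw [hbs] at hb; exact hb
        rcases cb with ⟨hsBb, eb, -⟩ | ⟨hsnb, eb⟩
        · rcases ca with ⟨h12a, h3a, ea, -⟩ | ⟨h12a, h3a, h6a, ea, -⟩ |
            ⟨h12a, h3a, h6a, ea, -⟩ | ⟨h12a, h6a, h2a, ea, -⟩ | ⟨h12a, hn62a, ea, -⟩ <;>
            rw [ea, eb] at heq
          · exact (sol (9 * t) (9 * t) s' ha' ha' hsBb (by omega)).elim
          · exact (sol (9 * t) (3 * s') (3 * s') ha' hb' hb' (by omega)).elim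
          · exact absurd (show (3 : ℕ) * t ∈ B by
              rw [show 3 * t = 3 * s' by omega]; exact hb') h3a
          · exact (sol (9 * t) (3 * s') (3 * s') ha' hb' hb' (by omega)).elim
          · exact absurd (⟨show (6 : ℕ) * t ∈ B by
                rw [show 6 * t = 3 * s' by omega]; exact hb',
              show (2 : ℕ) * t ∈ B by
                rw [show 2 * t = s' by omega]; exact hsBb⟩ :
              (6 * t ∈ B ∧ 2 * t ∈ B)) hn62a
        · rcases ca with ⟨h12a, h3a, ea, -⟩ | ⟨h12a, h3a, h6a, ea, -⟩ |
            ⟨h12a, h3a, h6a, ea, -⟩ | ⟨h12a, h6a, h2a, ea, -⟩ | ⟨h12a, hn62a, ea, -⟩ <;>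
            rw [ea, eb] at heq
          · exact (sol (9 * t) (3 * s') (9 * t) ha' hb' ha' (by omega)).elim
          · exact absurd (show (3 : ℕ) * t ∈ B by
              rw [show 3 * t = 3 * s' by omega]; exact hb') h3a
          · exact absurd (show (6 : ℕ) * t ∈ B by
              rw [show 6 * t = 3 * s' by omega]; exact hb') h6a
          · exact (sol (9 * t) (6 * t) (3 * s') ha' h6a hb' (by omega)).elim
          · exact absurd (show (12 : ℕ) * t ∈ B by
              rw [show 12 * t = 3 * s' by omega]; exact hb') h12a
      · -- b = 9*t'
        have hb' : 9 * t' ∈ B := by rw [hbt] at hb; exact hb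
        rcases ca with ⟨h12a, h3a, ea, -⟩ | ⟨h12a, h3a, h6a, ea, -⟩ |
          ⟨h12a, h3a, h6a, ea, -⟩ | ⟨h12a, h6a, h2a, ea, -⟩ | ⟨h12a, hn62a, ea, -⟩ <;>
          rcases cb with ⟨h12b, h3b, eb, -⟩ | ⟨h12b, h3b, h6b, eb, -⟩ |
            ⟨h12b, h3b, h6b, eb, -⟩ | ⟨h12b, h6b, h2b, eb, -⟩ | ⟨h12b, hn62b, eb, -⟩ <;>
          rw [ea, eb] at heq
        -- b1,b1
        · omega
        -- b1,b2
        · exact (sol (9 * t') (3 * t) (9 * t) hb' h3a ha' (by omega)).elim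
        -- b1,b3
        · exact absurd (show (3 : ℕ) * t' ∈ B by
            rw [show 3 * t' = 12 * t by omega]; exact h12a) h3b
        -- b1,b4
        · exact (sol (9 * t') (3 * t) (9 * t) hb' h3a ha' (by omega)).elim
        -- b1,b5
        · exact (sol (9 * t') (3 * t) (3 * t) hb' h3a h3a (by omega)).elim
        -- b2,b1
        · exact (sol (9 * t) (3 * t') (9 * t') ha' h3b hb' (by omega)).elim
        -- b2,b2
        · omega
        -- b2,b3
        · exact (sol (9 * t') (12 * t) (9 * t') hb' h12a hb' (by omega)).elim
        -- b2,b4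
        · omega
        -- b2,b5
        · exact (sol (9 * t') (6 * t) (9 * t') hb' h6a hb' (by omega)).elim
        -- b3,b1
        · exact absurd (show (3 : ℕ) * t ∈ B by
            rw [show 3 * t = 12 * t' by omega]; exact h12b) h3a
        -- b3,b2
        · exact (sol (9 * t) (12 * t') (9 * t) ha' h12b ha' (by omega)).elim
        -- b3,b3
        · omega
        -- b3,b4
        · exact (sol (9 * t) (9 * t) (2 * t') ha' ha' h2b (by omega)).elim
        -- b3,b5
        · exact (sol (9 * t') (12 * t) (9 * t') hb' h12a hb' (by omega)).elim
        -- b4,b1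
        · exact (sol (9 * t) (3 * t') (9 * t') ha' h3b hb' (by omega)).elim
        -- b4,b2
        · omega
        -- b4,b3
        · exact (sol (9 * t') (9 * t') (2 * t) hb' hb' h2a (by omega)).elim
        -- b4,b4
        · omega
        -- b4,b5
        · exact (sol (9 * t') (6 * t) (9 * t') hb' h6a hb' (by omega)).elim
        -- b5,b1
        · exact (sol (9 * t) (3 * t') (3 * t') ha' h3b h3b (by omega)).elim
        -- b5,b2
        · exact (sol (9 * t) (6 * t') (9 * t) ha' h6b ha' (by omega)).elim
        -- b5,b3
        · exact (sol (9 * t) (12 * t') (9 * t) ha' h12b ha' (by omega)).elim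
        -- b5,b4
        · exact (sol (9 * t) (6 * t') (9 * t) ha' h6b ha' (by omega)).elim
        -- b5,b5
        · omega
  exact Finset.card_le_card_of_injOn f hmap hinj
end

section
/- Let b > 1 and c be coprime positive integers with c > 2b, and let n be a positive integer. Then the set A_n := {x ∈ [1,n] : c·x > 2b·n} ∪ {x ∈ [1,n] : c·x ≤ 2b·n and b ∤ x} contains no solutions to b·(x+y) = c·z with x,y,z ∈ A_n. -/
theorem stmt_8 (b c n : ℕ) (hb : 1 < b) (hcop : Nat.Coprime b c) (hc : 2 * b < c)
    (hn : 1 ≤ n)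
    (A : Finset ℕ)
    (hA : A = (Finset.Icc 1 n).filter
      (fun x => 2 * b * n < c * x ∨ (c * x ≤ 2 * b * n ∧ ¬ b ∣ x))) :
    ¬ ∃ x ∈ A, ∃ y ∈ A, ∃ z ∈ A, b * (x + y) = c * z := by
  subst hA
  rintro ⟨x, hx, y, hy, z, hz, heq⟩
  simp only [Finset.mem_filter, Finset.mem_Icc] at hx hy hz
  have hbz : b ∣ z := by
    have : b ∣ z * c := ⟨x + y, by rw [mul_comm z c]; exact heq.symm⟩
    exact hcop.dvd_of_dvd_mul_right this
  have h1 : 2 * b * n < c * z := by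
    rcases hz.2 with h | ⟨_, hnd⟩
    · exact h
    · exact absurd hbz hnd
  have h2 : b * (x + y) ≤ 2 * b * n := by nlinarith [hx.1.2, hy.1.2]
  omega
end

section
/- Let b > 1 and c be coprime positive integers with c > 2b and n ≥ 1. The set A_n := {x ∈ [1,n] : c·x > 2b·n} ∪ {x ∈ [1,n] : c·x ≤ 2b·n and b ∤ x} has cardinality exactly n − ⌊2n/c⌋. -/
theorem stmt_10 (b c n : ℕ) (hb : 1 < b) (hcop : Nat.Coprime b c) (hc : 2 * b < c)
    (hn : 1 ≤ n) :
    ((Finset.Icc 1 n).filter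
      (fun x => 2 * b * n < c * x ∨ (c * x ≤ 2 * b * n ∧ ¬ b ∣ x))).card
      = n - 2 * n / c := by
  have hc0 : 0 < c := by omega
  have hkey : ((Finset.Icc 1 n).filter (fun x => c * x ≤ 2 * b * n ∧ b ∣ x))
      = (Finset.Icc 1 (2 * n / c)).image (fun k => b * k) := by
    ext x
    simp only [Finset.mem_filter, Finset.mem_image, Finset.mem_Icc]
    constructor
    · rintro ⟨⟨hx1, hxn⟩, hle, k, rfl⟩
      refine ⟨k, ⟨?_, ?_⟩, rfl⟩
      · nlinarith
      · rw [Nat.le_div_iff_mul_le hc0]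
        nlinarith
    · rintro ⟨k, ⟨hk1, hk2⟩, rfl⟩
      rw [Nat.le_div_iff_mul_le hc0] at hk2
      have h1 : 2 * b * k < c * k := by
        have := Nat.mul_le_mul_right k (le_of_lt hc)
        nlinarith
      refine ⟨⟨by nlinarith, by nlinarith⟩, by nlinarith, ⟨k, rfl⟩⟩
  have hcard : ((Finset.Icc 1 n).filter (fun x => c * x ≤ 2 * b * n ∧ b ∣ x)).card
      = 2 * n / c := by
    rw [hkey, Finset.card_image_of_injective _ (fun a b' h => by
      exact Nat.eq_of_mul_eq_mul_left (by omega) h), Nat.card_Icc]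
    exact Nat.succ_sub_one _
  have hsplit := Finset.card_filter_add_card_filter_not
    (p := fun x => c * x ≤ 2 * b * n ∧ b ∣ x) (s := Finset.Icc 1 n)
  have heq : (Finset.Icc 1 n).filter
      (fun x => 2 * b * n < c * x ∨ (c * x ≤ 2 * b * n ∧ ¬ b ∣ x))
      = (Finset.Icc 1 n).filter (fun x => ¬ (c * x ≤ 2 * b * n ∧ b ∣ x)) := by
    apply Finset.filter_congr
    intro x _
    constructor
    · rintro (h | ⟨h1, h2⟩) ⟨h3, h4⟩ <;> [omega; exact h2 h4]
    · intro h
      by_cases hd : b ∣ x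
      · left; by_contra h'; exact h ⟨by omega, hd⟩
      · by_cases hle : c * x ≤ 2 * b * n
        · right; exact ⟨hle, hd⟩
        · left; omega
  rw [heq]
  have hIcc : (Finset.Icc 1 n).card = n := by simp
  have hdiv : 2 * n / c ≤ n := by
    calc 2 * n / c ≤ 2 * n / 2 := Nat.div_le_div_left (by omega) (by omega)
    _ = n := by omega
  omega
end

section
/- Let b > 1 and c be positive integers with gcd(b,c) = 1 and 2 ≤ c < 2b, and let n ≥ 1. Then the set A'_n := {x ∈ [1,n] : b ∤ x} contains no solutions to b·(x+y) = c·z with x,y,z ∈ A'_n, and every subset B of {1,...,n} avoiding b(x+y)=cz satisfies |B| ≤ |A'_n| = n − ⌊n/b⌋. -/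
/-!
Since `b` is coprime to `c`, an equation `b * (x + y) = c * z` forces `b ∣ z`, so the non-multiples
of `b` avoid it. For the upper bound induct on `n`, with `m = n / b`. If `b * m ∉ B`, induction on
`[1, b * m - 1]` suffices. If `b * m ∈ B`, then no two elements of `B` sum to `s = c * m`, and
`2 * m ≤ s < 2 * b * m`. When `s ≤ n + 1`, each pair `{x, s - x}` of `[1, s - 1]` misses `B`
at least once, which already leaves out `m` elements. Otherwise the pairs cover `[s - n, n]`, and
induction applies to `[1, s - n - 1]`.
-/

open Finset

def Avoids (b c : ℕ) (B : Finset ℕ) : Prop :=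
  ¬ ∃ x ∈ B, ∃ y ∈ B, ∃ z ∈ B, b * (x + y) = c * z

namespace Avoids

variable {b c : ℕ} {B : Finset ℕ}

theorem mono {B' : Finset ℕ} (h : Avoids b c B) (hsub : B' ⊆ B) : Avoids b c B' :=
  fun ⟨x, hx, y, hy, z, hz, he⟩ => h ⟨x, hsub hx, y, hsub hy, z, hsub hz, he⟩

theorem add_ne {m x y : ℕ} (h : Avoids b c B) (hz : b * m ∈ B) (hx : x ∈ B) (hy : y ∈ B) :
    x + y ≠ c * m := by
  intro hxy
  exact h ⟨x, hx, y, hy, b * m, hz, by rw [hxy]; ring⟩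

end Avoids

theorem avoids_filter_not_dvd {b c : ℕ} (hbc : Nat.Coprime b c) (S : Finset ℕ) :
    Avoids b c (S.filter (fun x => ¬ b ∣ x)) := by
  rintro ⟨x, -, y, -, z, hz, he⟩
  exact (mem_filter.1 hz).2 (hbc.dvd_of_dvd_mul_left ⟨x + y, he.symm⟩)

theorem card_filter_not_dvd_Icc (b n : ℕ) :
    #((Icc 1 n).filter (fun x => ¬ b ∣ x)) = n - n / b := by
  have hIoc : Icc 1 n = Ioc 0 n := by ext; simp; omega
  have := card_filter_add_card_filter_not (s := Ioc 0 n) (b ∣ ·)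
  rw [hIoc, ← Nat.Ioc_filter_dvd_card_eq_div n b]
  simp only [Nat.card_Ioc] at this
  omega

theorem card_le_of_forall_add_ne {S : Finset ℕ} {s lo : ℕ} (hS : ∀ x ∈ S, lo ≤ x ∧ lo + x ≤ s)
    (hsum : ∀ x ∈ S, ∀ y ∈ S, x + y ≠ s) : #S ≤ (s + 1) / 2 - lo := by
  rw [← Nat.card_Ico]
  -- `x ↦ min x (s - x)` maps `S` injectively into `[lo, (s + 1) / 2)`
  refine card_le_card_of_injOn (fun x => min x (s - x)) (fun x hx => ?_) (fun x hx y hy hxy => ?_)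
  · have := hS x hx
    have := hsum x hx x hx
    simp only [coe_Ico, Set.mem_Ico]
    omega
  · by_contra hne
    have := hsum x hx y hy
    have := hS x hx
    have := hS y hy
    simp only at hxy
    omega

theorem card_filter_not_le_le {B : Finset ℕ} {n : ℕ} (hB : B ⊆ Icc 1 n) (l : ℕ) :
    #(B.filter (fun x => ¬ x ≤ l)) ≤ n - l := by
  refine (card_le_card (t := Ioc l n) fun x hx => ?_).trans (Nat.card_Ioc _ _).le
  have := mem_Icc.1 (hB (mem_filter.1 hx).1)
  have := (mem_filter.1 hx).2
  simp only [mem_Ioc]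
  omega

theorem add_pred_div_two_le_add_div {b m n s : ℕ} (hb : 2 ≤ b) (hbm : b * m ≤ n) (hs : s + m ≤ 2 * (b * m))
    (hsn : n + 1 < s) : m + (s - 1) / 2 ≤ n + (s - n - 1) / b := by
  set t := s - n - 1
  set q := t / b
  have ht : b * q + t % b = t := Nat.div_add_mod t b
  have hr : t % b < b := Nat.mod_lt t (by omega)
  have hq : q < m := Nat.div_lt_of_lt_mul (by omega)
  -- `(b - 2) * q ≤ (b - 2) * (m - 1)`, expanded
  have : b * q + b + 2 * m ≤ b * m + 2 * q + 2 := by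
    obtain ⟨k, rfl⟩ : ∃ k, m = q + 1 + k := ⟨m - q - 1, by omega⟩
    obtain ⟨d, rfl⟩ : ∃ d, b = d + 2 := ⟨b - 2, by omega⟩
    nlinarith
  omega

section InductionStep

variable {b c n : ℕ} {B : Finset ℕ}

theorem card_le_of_mul_div_notMem (hb : 0 < b) (hB : B ⊆ Icc 1 n)
    (hlow : ∀ l < n, #(B.filter (· ≤ l)) ≤ l - l / b) (hm : 0 < n / b)
    (hz : b * (n / b) ∉ B) : #B ≤ n - n / b := by
  set m := n / b
  have hbm : b * m ≤ n := Nat.mul_div_le n b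
  have hmbm : m ≤ b * m := Nat.le_mul_of_pos_left m hb
  have hdiv : (b * m - 1) / b = m - 1 := by
    obtain ⟨k, hk⟩ : ∃ k, m = k + 1 := ⟨m - 1, by omega⟩
    rw [hk, Nat.mul_succ, Nat.add_sub_assoc hb, Nat.mul_add_div hb, Nat.div_eq_of_lt (by omega)]
    rfl
  have hhigh : #(B.filter (fun x => ¬ x ≤ b * m - 1)) ≤ n - b * m := by
    refine (card_le_card (t := Ioc (b * m) n) fun x hx => ?_).trans (Nat.card_Ioc _ _).le
    have := mem_Icc.1 (hB (mem_filter.1 hx).1)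
    have : x ≠ b * m := fun h => hz (h ▸ (mem_filter.1 hx).1)
    have := (mem_filter.1 hx).2
    simp only [mem_Ioc]
    omega
  have := hlow (b * m - 1) (by omega)
  have := card_filter_add_card_filter_not (s := B) (· ≤ b * m - 1)
  omega

theorem card_le_of_mul_div_mem (hb : 2 ≤ b) (hc : 2 ≤ c) (hcb : c < 2 * b) (hB : B ⊆ Icc 1 n)
    (hav : Avoids b c B) (hlow : ∀ l < n, #(B.filter (· ≤ l)) ≤ l - l / b)
    (hz : b * (n / b) ∈ B) : #B ≤ n - n / b := by
  set m := n / b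
  set s := c * m
  have hbm : b * m ≤ n := Nat.mul_div_le n b
  have h2m : 2 * m ≤ s := Nat.mul_le_mul_right m hc
  have hs : s + m ≤ 2 * (b * m) :=
    calc s + m = (c + 1) * m := by ring
      _ ≤ 2 * b * m := Nat.mul_le_mul_right m (by omega)
      _ = 2 * (b * m) := by ring
  have hsum {p : ℕ → Prop} [DecidablePred p] : ∀ x ∈ B.filter p, ∀ y ∈ B.filter p, x + y ≠ s :=
    fun x hx y hy => hav.add_ne hz (mem_filter.1 hx).1 (mem_filter.1 hy).1
  rcases le_or_gt s (n + 1) with hsn | hsn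
  · have hlow' : #(B.filter (· ≤ s - 1)) ≤ (s + 1) / 2 - 1 := by
      refine card_le_of_forall_add_ne (fun x hx => ?_) hsum
      have := mem_Icc.1 (hB (mem_filter.1 hx).1)
      have := (mem_filter.1 hx).2
      omega
    have := card_filter_not_le_le hB (s - 1)
    have := card_filter_add_card_filter_not (s := B) (· ≤ s - 1)
    omega
  · have hhigh : #(B.filter (fun x => ¬ x ≤ s - n - 1)) ≤ (s + 1) / 2 - (s - n) := by
      refine card_le_of_forall_add_ne (fun x hx => ?_) hsum
      have := mem_Icc.1 (hB (mem_filter.1 hx).1)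
      have := (mem_filter.1 hx).2
      omega
    have := hlow (s - n - 1) (by omega)
    have := add_pred_div_two_le_add_div hb hbm hs hsn
    have := card_filter_add_card_filter_not (s := B) (· ≤ s - n - 1)
    omega

end InductionStep

theorem card_le_sub_div_of_avoids {b c : ℕ} (hb : 2 ≤ b) (hc : 2 ≤ c) (hcb : c < 2 * b) (n : ℕ)
    {B : Finset ℕ} (hB : B ⊆ Icc 1 n) (hav : Avoids b c B) : #B ≤ n - n / b := by
  induction n using Nat.strong_induction_on generalizing B with
  | _ n ih =>
  have hlow : ∀ l < n, #(B.filter (· ≤ l)) ≤ l - l / b := fun l hl =>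
    ih l hl (fun x hx => mem_Icc.2 ⟨(mem_Icc.1 (hB (mem_filter.1 hx).1)).1, (mem_filter.1 hx).2⟩)
      (hav.mono (filter_subset _ _))
  rcases Nat.eq_zero_or_pos (n / b) with hm | hm
  · simpa [hm] using card_le_card hB
  by_cases hz : b * (n / b) ∈ B
  · exact card_le_of_mul_div_mem hb hc hcb hB hav hlow hz
  · exact card_le_of_mul_div_notMem (by omega) hB hlow hm hz

theorem stmt_11_general (b c n : ℕ) (hb : 1 < b) (hcop : Nat.Coprime b c)
    (hc1 : 2 ≤ c) (hc2 : c < 2 * b)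
    (A : Finset ℕ) (hA : A = (Finset.Icc 1 n).filter (fun x => ¬ b ∣ x)) :
    (¬ ∃ x ∈ A, ∃ y ∈ A, ∃ z ∈ A, b * (x + y) = c * z) ∧
    (∀ B : Finset ℕ, B ⊆ Finset.Icc 1 n →
      (¬ ∃ x ∈ B, ∃ y ∈ B, ∃ z ∈ B, b * (x + y) = c * z) →
      B.card ≤ A.card) ∧
    A.card = n - n / b := by
  subst hA
  refine ⟨avoids_filter_not_dvd hcop _, fun B hB hav => ?_, card_filter_not_dvd_Icc b n⟩
  rw [card_filter_not_dvd_Icc]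
  exact card_le_sub_div_of_avoids hb hc1 hc2 n hB hav

theorem stmt_11 (b c n : ℕ) (hb : 1 < b) (hcop : Nat.Coprime b c)
    (hc1 : 2 ≤ c) (hc2 : c < 2 * b) (hn : 1 ≤ n)
    (A : Finset ℕ) (hA : A = (Finset.Icc 1 n).filter (fun x => ¬ b ∣ x)) :
    (¬ ∃ x ∈ A, ∃ y ∈ A, ∃ z ∈ A, b * (x + y) = c * z) ∧
    (∀ B : Finset ℕ, B ⊆ Finset.Icc 1 n →
      (¬ ∃ x ∈ B, ∃ y ∈ B, ∃ z ∈ B, b * (x + y) = c * z) →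
      B.card ≤ A.card) ∧
    A.card = n - n / b :=
  stmt_11_general b c n hb hcop hc1 hc2 A hA
end

section
/- Let b > 1 be an integer and let n ≥ 1. The set A''_n := {x ∈ [1,n] : 2b·x > n} contains no solutions to b·(x+y) = z with x,y,z ∈ A''_n, and every subset B of {1,...,n} avoiding b(x+y) = z satisfies |B| ≤ |A''_n| = n − ⌊n/(2b)⌋. -/
theorem stmt_12 (b n : ℕ) (hb : 1 < b) (hn : 1 ≤ n)
    (A : Finset ℕ) (hA : A = (Finset.Icc 1 n).filter (fun x => n < 2 * b * x)) :
    (¬ ∃ x ∈ A, ∃ y ∈ A, ∃ z ∈ A, b * (x + y) = z) ∧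
    (∀ B : Finset ℕ, B ⊆ Finset.Icc 1 n →
      (¬ ∃ x ∈ B, ∃ y ∈ B, ∃ z ∈ B, b * (x + y) = z) →
      B.card ≤ A.card) ∧
    A.card = n - n / (2 * b) := by
  have hb0 : 0 < b := by omega
  set m := n / (2 * b) with hm
  have hmn : m ≤ n := Nat.div_le_self _ _
  have hm2 : m = n / b / 2 := by rw [hm, Nat.div_div_eq_div_mul, Nat.mul_comm]
  clear_value m
  have hcard : A.card = n - m := by
    have h1 : (Finset.Icc 1 n).filter (fun x => ¬ n < 2 * b * x) = Finset.Icc 1 m := by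
      ext x
      simp only [Finset.mem_filter, Finset.mem_Icc, not_lt]
      constructor
      · rintro ⟨⟨ha1, ha2⟩, h3⟩
        refine ⟨ha1, ?_⟩
        rw [hm]
        have e1 : x * (2 * b) = 2 * b * x := Nat.mul_comm _ _
        exact (Nat.le_div_iff_mul_le (by omega)).2 (by omega)
      · rintro ⟨ha1, ha2⟩
        have ha2' := ha2
        rw [hm] at ha2'
        have h3 := (Nat.le_div_iff_mul_le (k := 2 * b) (by omega)).1 ha2'
        have e1 : x * (2 * b) = 2 * b * x := Nat.mul_comm _ _
        exact ⟨⟨ha1, le_trans ha2 hmn⟩, by omega⟩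
    have h2 := Finset.card_filter_add_card_filter_not
      (s := Finset.Icc 1 n) (p := fun x => n < 2 * b * x)
    rw [h1] at h2
    rw [hA]
    simp only [Nat.card_Icc] at h2
    omega
  refine ⟨?_, ?_, hcard⟩
  · rintro ⟨x, hx, y, hy, z, hz, hxyz⟩
    rw [hA] at hx hy hz
    simp only [Finset.mem_filter, Finset.mem_Icc] at hx hy hz
    have hkey : 2 * b * x + 2 * b * y = 2 * z := by rw [← hxyz]; ring
    omega
  · intro B hB havoid
    rw [hcard]
    rcases B.eq_empty_or_nonempty with hBe | hBne
    · simp [hBe]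
    have hBn : B.card ≤ n := by
      have := Finset.card_le_card hB
      simpa [Nat.card_Icc] using this
    set x0 := B.min' hBne with hx0
    have hx0B : x0 ∈ B := B.min'_mem hBne
    have hx0min : ∀ y ∈ B, x0 ≤ y := fun y hy => B.min'_le y hy
    have hx0n : 1 ≤ x0 ∧ x0 ≤ n := by
      have := hB hx0B
      simpa [Finset.mem_Icc] using this
    set M := Finset.Icc 1 n \ B with hM
    have hMcard : B.card + M.card = n := by
      rw [hM, Finset.card_sdiff_of_subset hB, Nat.card_Icc]
      omega
    suffices h : m ≤ M.card by omega
    set q := n / b with hq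
    have hqn : q ≤ n := Nat.div_le_self _ _
    have hqb : q * b ≤ n := Nat.div_mul_le_self _ _
    set T := q - x0 with hT
    set C := (B ∩ Finset.Icc 1 T).image (fun y => b * (x0 + y)) with hC
    have hCcard : C.card = (B ∩ Finset.Icc 1 T).card := by
      apply Finset.card_image_of_injective
      intro a a' hev
      have : x0 + a = x0 + a' := Nat.eq_of_mul_eq_mul_left hb0 hev
      omega
    have hCM : C ⊆ M := by
      intro c hc
      rw [hC] at hc
      simp only [Finset.mem_image, Finset.mem_inter, Finset.mem_Icc] at hc
      obtain ⟨y, ⟨hyB, hy1, hyT⟩, rfl⟩ := hc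
      have hle : x0 + y ≤ q := by omega
      have hub : b * (x0 + y) ≤ n := by
        calc b * (x0 + y) ≤ b * q := Nat.mul_le_mul_left _ hle
        _ = q * b := Nat.mul_comm _ _
        _ ≤ n := hqb
      have hnB : b * (x0 + y) ∉ B := by
        intro hcon
        exact havoid ⟨x0, hx0B, y, hyB, b * (x0 + y), hcon, rfl⟩
      rw [hM]
      simp only [Finset.mem_sdiff, Finset.mem_Icc]
      have hpos : 0 < b * (x0 + y) := Nat.mul_pos hb0 (by omega)
      exact ⟨⟨by omega, hub⟩, hnB⟩
    have hlow : Finset.Icc 1 (x0 - 1) ⊆ M := by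
      intro t ht
      simp only [Finset.mem_Icc] at ht
      rw [hM]
      simp only [Finset.mem_sdiff, Finset.mem_Icc]
      refine ⟨⟨ht.1, by omega⟩, fun hcon => ?_⟩
      have := hx0min t hcon
      omega
    have hdisj : Disjoint C (Finset.Icc 1 (x0 - 1)) := by
      rw [Finset.disjoint_left]
      intro c hc hc'
      rw [hC] at hc
      simp only [Finset.mem_image, Finset.mem_inter, Finset.mem_Icc] at hc
      simp only [Finset.mem_Icc] at hc'
      obtain ⟨y, ⟨hyB, hy1, hyT⟩, rfl⟩ := hc
      have : x0 + y ≤ b * (x0 + y) := Nat.le_mul_of_pos_left _ hb0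
      omega
    have h1 : C.card + (x0 - 1) ≤ M.card := by
      have hsub := Finset.card_le_card (Finset.union_subset hCM hlow)
      rw [Finset.card_union_of_disjoint hdisj] at hsub
      simpa [Nat.card_Icc] using hsub
    have h2 : T ≤ (B ∩ Finset.Icc 1 T).card + M.card := by
      have hsub : Finset.Icc 1 T ⊆ (B ∩ Finset.Icc 1 T) ∪ M := by
        intro t ht
        simp only [Finset.mem_Icc] at ht
        by_cases htB : t ∈ B
        · exact Finset.mem_union_left _ (by
            simp only [Finset.mem_inter, Finset.mem_Icc]
            exact ⟨htB, ht⟩)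
        · refine Finset.mem_union_right _ ?_
          rw [hM]
          simp only [Finset.mem_sdiff, Finset.mem_Icc]
          exact ⟨⟨ht.1, by omega⟩, htB⟩
      calc T = (Finset.Icc 1 T).card := by simp [Nat.card_Icc]
      _ ≤ ((B ∩ Finset.Icc 1 T) ∪ M).card := Finset.card_le_card hsub
      _ ≤ _ := Finset.card_union_le _ _
    have hqM : q ≤ 2 * M.card + 1 := by omega
    rw [hq] at hm2
    have : q / 2 ≤ M.card := by
      calc q / 2 ≤ (2 * M.card + 1) / 2 := Nat.div_le_div_right hqM
      _ = M.card := by omega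
    omega
end

section
/- Let b > 1 and c be positive integers with gcd(b,c)=1 and 2 ≤ c < b, and let B ⊆ {1,...,n} avoid b(x+y)=cz. If z = b·z₁ is an element of B divisible by b, then at most ⌈c·z₁/2⌉ of the numbers in {1,...,c·z₁} lie in B. -/
open Finset

/-- `x ↦ min x (m - x)` identifies each pair `{x, m - x}` and sends `m` to `0`; the hypothesis
makes it injective on `s ∩ [1, m]` and keeps it away from `m / 2`. -/
theorem card_inter_Icc_le_of_forall_add_ne {s : Finset ℕ} {m : ℕ}
    (h : ∀ x ∈ s, ∀ y ∈ s, x + y ≠ m) : #(s ∩ Icc 1 m) ≤ (m + 1) / 2 := by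
  have hinj := card_le_card_of_injOn (fun x => min x (m - x))
    (s := s ∩ Icc 1 m) (t := range ((m + 1) / 2)) ?_ ?_
  · simpa using hinj
  · intro x hx
    simp only [coe_inter, coe_Icc, Set.mem_inter_iff, mem_coe, Set.mem_Icc] at hx
    have hxx := h x hx.1 x hx.1
    simp only [mem_coe, mem_range]
    omega
  · intro x hx y hy hxy
    simp only [coe_inter, coe_Icc, Set.mem_inter_iff, mem_coe, Set.mem_Icc] at hx hy
    have hxy' := h x hx.1 y hy.1
    have hyx := h y hy.1 x hx.1
    simp only at hxy
    omega

theorem stmt_13_general (b c : ℕ)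
    (B : Finset ℕ)
    (havoid : ¬ ∃ x ∈ B, ∃ y ∈ B, ∃ z ∈ B, b * (x + y) = c * z)
    (z₁ : ℕ) (hz : b * z₁ ∈ B) :
    (B ∩ Finset.Icc 1 (c * z₁)).card ≤ (c * z₁ + 1) / 2 := by
  refine card_inter_Icc_le_of_forall_add_ne fun x hx y hy hxy => havoid ?_
  exact ⟨x, hx, y, hy, b * z₁, hz, by rw [hxy]; ring⟩

theorem stmt_13 (b c n : ℕ) (hb : 1 < b) (hcop : Nat.Coprime b c)
    (hc1 : 2 ≤ c) (hc2 : c < b)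
    (B : Finset ℕ) (hB : B ⊆ Finset.Icc 1 n)
    (havoid : ¬ ∃ x ∈ B, ∃ y ∈ B, ∃ z ∈ B, b * (x + y) = c * z)
    (z₁ : ℕ) (hz : b * z₁ ∈ B) :
    (B ∩ Finset.Icc 1 (c * z₁)).card ≤ (c * z₁ + 1) / 2 :=
  stmt_13_general b c B havoid z₁ hz
end
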